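/- arXiv:2312.11955 — 2 statements merged into one kernel-verified Lean document; each statement's English description precedes it below -/
import Mathlib

section
/- For every m ≥ 1, the size of the hypothesis space of expression trees with at most 4m−1 nodes over 2m variables and 2 binary operators, |S(4m−1)| = ∑_{i=0}^{2m-1} C_i (2m+1)^{i+1} 2^i, is at least (16m+8)^{m−1/2}. -/
lemma aux_four_pow_le (n : ℕ) : 4 ^ n ≤ (n + 1) * Nat.centralBinom n := by
  induction n with
  | zero => simp [Nat.centralBinom]
  | succ n ih =>
    have h := Nat.succ_mul_centralBinom_succ n
    have hpos : 0 < n + 1 := n.succ_pos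
    have key : (n + 1) * (4 ^ (n + 1)) ≤ (n + 1) * ((n + 2) * Nat.centralBinom (n + 1)) := by
      calc (n + 1) * 4 ^ (n + 1) = 4 * (n + 1) * 4 ^ n := by ring
        _ ≤ 4 * (n + 1) * ((n + 1) * Nat.centralBinom n) :=
            Nat.mul_le_mul_left _ ih
        _ ≤ 2 * (2 * n + 1) * (n + 2) * Nat.centralBinom n := by
            have : 4 * (n + 1) * (n + 1) ≤ 2 * (2 * n + 1) * (n + 2) := by nlinarith
            nlinarith [Nat.centralBinom_pos n]
        _ = (n + 2) * ((n + 1) * Nat.centralBinom (n + 1)) := by rw [h]; ring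
        _ = (n + 1) * ((n + 2) * Nat.centralBinom (n + 1)) := by ring
    exact Nat.le_of_mul_le_mul_left key hpos

lemma aux_cat (n : ℕ) : 4 ^ n ≤ (n + 1) ^ 2 * catalan n := by
  have h := aux_four_pow_le n
  have h2 := succ_mul_catalan_eq_centralBinom n
  calc 4 ^ n ≤ (n + 1) * Nat.centralBinom n := h
    _ = (n + 1) ^ 2 * catalan n := by rw [← h2]; ring

lemma aux_nat (m : ℕ) (hm : 1 ≤ m) :
    (16 * m + 8) ^ (2 * m - 1) ≤ (2 * m) ^ 2 *
      (∑ i ∈ Finset.range (2 * m - 1 + 1),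
        catalan i * (2 * m + 1) ^ (i + 1) * 2 ^ i) := by
  set n := 2 * m - 1 with hn
  have hn1 : n + 1 = 2 * m := by omega
  have hterm : (16 * m + 8) ^ n ≤ (2 * m) ^ 2 * (catalan n * (2 * m + 1) ^ (n + 1) * 2 ^ n) := by
    have hc := aux_cat n
    calc (16 * m + 8) ^ n = 4 ^ n * ((2 * m + 1) ^ n * 2 ^ n) := by
          rw [← Nat.mul_pow, ← Nat.mul_pow]; ring_nf
      _ ≤ (n + 1) ^ 2 * catalan n * ((2 * m + 1) ^ n * 2 ^ n) :=
          Nat.mul_le_mul_right _ hc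
      _ ≤ (n + 1) ^ 2 * catalan n * ((2 * m + 1) ^ (n + 1) * 2 ^ n) := by
          refine Nat.mul_le_mul_left _ (Nat.mul_le_mul_right _ ?_)
          exact Nat.pow_le_pow_right (by omega) (by omega)
      _ = (2 * m) ^ 2 * (catalan n * (2 * m + 1) ^ (n + 1) * 2 ^ n) := by rw [hn1]; ring
  refine hterm.trans (Nat.mul_le_mul_left _ ?_)
  exact Finset.single_le_sum (f := fun i => catalan i * (2 * m + 1) ^ (i + 1) * 2 ^ i)
    (fun i _ => Nat.zero_le _) (Finset.self_mem_range_succ n)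

/-- Lower bound for the hypothesis space of expression trees with at most `4m - 1`
nodes over `2m` variables and `2` binary operators:
`|S(4m-1)| = ∑_{i=0}^{2m-1} C_i (2m+1)^{i+1} 2^i ≥ (16m+8)^{m-1/2}`, valid whenever
`((2m-1)+1)^2 ≤ (16m+8)^{m-1/2}` (which holds for `m` sufficiently large). -/
theorem stmt_12 (m : ℕ) (hm : 1 ≤ m)
    (hdom : ((2 * m : ℕ) : ℝ) ^ 2 ≤ ((16 * m + 8 : ℕ) : ℝ) ^ ((m : ℝ) - 1 / 2)) :
    ((16 * m + 8 : ℕ) : ℝ) ^ ((m : ℝ) - 1 / 2)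
      ≤ ((∑ i ∈ Finset.range (2 * m - 1 + 1),
          catalan i * (2 * m + 1) ^ (i + 1) * 2 ^ i : ℕ) : ℝ) := by
  set b : ℝ := ((16 * m + 8 : ℕ) : ℝ) with hb
  set X : ℝ := b ^ ((m : ℝ) - 1 / 2) with hX
  set S : ℝ := ((∑ i ∈ Finset.range (2 * m - 1 + 1),
          catalan i * (2 * m + 1) ^ (i + 1) * 2 ^ i : ℕ) : ℝ) with hS
  have hbpos : (0 : ℝ) < b := by
    rw [hb]
    have : (0 : ℕ) < 16 * m + 8 := by omega
    exact_mod_cast this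
  have hXpos : 0 < X := Real.rpow_pos_of_pos hbpos _
  have hsq : X ^ 2 = b ^ (2 * m - 1 : ℕ) := by
    rw [hX, ← Real.rpow_natCast b (2 * m - 1), ← Real.rpow_natCast (b ^ _) 2,
      ← Real.rpow_mul hbpos.le]
    congr 1
    have : ((2 * m - 1 : ℕ) : ℝ) = 2 * (m : ℝ) - 1 := by
      have : (1 : ℕ) ≤ 2 * m := by omega
      push_cast [this]; ring
    rw [this]; ring
  have hnat := aux_nat m hm
  have hcast : (b : ℝ) ^ (2 * m - 1 : ℕ) ≤ ((2 * m : ℕ) : ℝ) ^ 2 * S := by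
    rw [hb, hS]; exact_mod_cast hnat
  have hmpos : (0 : ℝ) < ((2 * m : ℕ) : ℝ) ^ 2 := by
    have : (0 : ℕ) < 2 * m := by omega
    positivity
  have key : X * ((2 * m : ℕ) : ℝ) ^ 2 ≤ S * ((2 * m : ℕ) : ℝ) ^ 2 := by
    calc X * ((2 * m : ℕ) : ℝ) ^ 2 ≤ X * X := by
          apply mul_le_mul_of_nonneg_left hdom hXpos.le
      _ = X ^ 2 := by ring
      _ = b ^ (2 * m - 1 : ℕ) := hsq
      _ ≤ ((2 * m : ℕ) : ℝ) ^ 2 * S := hcast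
      _ = S * ((2 * m : ℕ) : ℝ) ^ 2 := by ring
  exact le_of_mul_le_mul_right key hmpos
end

section
/- If f(x₁,…,x_{2m}) = (x₁+x₂)⋯(x_{2i−1}+C)·D agrees with g(x₁,…,x_{2m}) = (x₁+x₂)⋯(x_{2i−1}+x_{2i})·D' as functions of the free variables x₁,…,x_{2i} for all real inputs, where C, D, D' are constants and D, D' ≠ 0, then C·D = x_{2i}·D' cannot hold identically unless f is obtained from g by evaluating x_{2i} at a constant; conversely, replacing the constant C in f by the variable x_{2i} and updating D yields a function equal to g. -/
/-- Induction step of vertical symbolic regression. With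
`f x = (∏_{j<i} (x_{2j-1}+x_{2j})) (x_{2i-1}+C) D` and
`g x = (∏_{j≤i} (x_{2j-1}+x_{2j})) D'` (`D, D' ≠ 0`): `f` cannot agree with `g`
identically in the free variables `x₁, …, x_{2i}` (since `C·D = x_{2i}·D'` cannot
hold identically); conversely, replacing the summary constant `C` by the variable
`x_{2i}` and updating the summary constant `D` to `D'` yields exactly `g`. -/
theorem stmt_18 (i : ℕ) (hi : 1 ≤ i) (C D D' : ℝ) (hD : D ≠ 0) (hD' : D' ≠ 0) :
    ¬ (∀ x : ℕ → ℝ,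
        (∏ j ∈ Finset.Icc 1 (i - 1), (x (2 * j - 1) + x (2 * j)))
            * (x (2 * i - 1) + C) * D
          = (∏ j ∈ Finset.Icc 1 i, (x (2 * j - 1) + x (2 * j))) * D') ∧
    (∀ x : ℕ → ℝ,
        (∏ j ∈ Finset.Icc 1 (i - 1), (x (2 * j - 1) + x (2 * j)))
            * (x (2 * i - 1) + x (2 * i)) * D'
          = (∏ j ∈ Finset.Icc 1 i, (x (2 * j - 1) + x (2 * j))) * D') := by
  obtain ⟨k, rfl⟩ : ∃ k, i = k + 1 := ⟨i - 1, by omega⟩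
  simp only [Nat.add_sub_cancel]
  have split : ∀ x : ℕ → ℝ,
      (∏ j ∈ Finset.Icc 1 (k + 1), (x (2 * j - 1) + x (2 * j)))
        = (∏ j ∈ Finset.Icc 1 k, (x (2 * j - 1) + x (2 * j)))
            * (x (2 * (k + 1) - 1) + x (2 * (k + 1))) := by
    intro x
    exact Finset.prod_Icc_succ_top (by omega) _
  constructor
  · intro h1
    have key : ∀ c : ℝ, (2 : ℝ) ^ k * (1 + C) * D = (2 : ℝ) ^ k * (1 + c) * D' := by
      intro c
      have h := h1 (fun n => if n = 2 * (k + 1) then c else 1)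
      rw [Finset.prod_Icc_succ_top (show 1 ≤ k + 1 by omega)
        (f := fun j => ((if 2 * j - 1 = 2 * (k + 1) then c else 1)
          + (if 2 * j = 2 * (k + 1) then c else 1)))] at h
      have e1 : (∏ j ∈ Finset.Icc 1 k,
          ((if 2 * j - 1 = 2 * (k + 1) then c else 1)
            + (if 2 * j = 2 * (k + 1) then c else 1))) = (2 : ℝ) ^ k := by
        have hterm : ∀ j ∈ Finset.Icc 1 k,
            ((if 2 * j - 1 = 2 * (k + 1) then c else 1)
              + (if 2 * j = 2 * (k + 1) then c else 1)) = (2 : ℝ) := by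
          intro j hj
          simp only [Finset.mem_Icc] at hj
          rw [if_neg (by omega), if_neg (by omega)]
          norm_num
        rw [Finset.prod_congr rfl hterm, Finset.prod_const, Nat.card_Icc]
        norm_num
      rw [e1] at h
      rw [if_neg (by omega), if_pos rfl] at h
      linarith [h]
    have h0 := key 0
    have h2 := key 2
    have hpow : (2 : ℝ) ^ k ≠ 0 := by positivity
    have : D' = 3 * D' := by
      have := h0.symm.trans h2
      field_simp at this
      nlinarith [this, pow_pos (by norm_num : (0:ℝ) < 2) k]
    have : D' = 0 := by linarith
    exact hD' this
  · intro x
    rw [split x]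
end
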